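/- Let p ≥ 0 and c > 0, and define f_{1/2}(v) := v (1 + 2 ln v)^{−1/2} for v ≥ 1. Then there exists a constant K > 0 such that for every t ≥ 1, ∫_1^∞ (1/v) ( log(1+2v) )^{p+1} · 1{ t > c f_{1/2}(v) } dv ≤ K ( log(1+t) )^{p+2}. -/

import Mathlib

/-!
Since `1 + 2 log v ≤ 2v`, we have `f_{1/2}(v)² ≥ v / 2`, so the integrand vanishes unless
`v < 2 (t/c)² ≤ V := (1 + 2/c²)(1 + t)²`. On `(1, V]` the factor `log (1 + 2v) ^ (p + 1)` is at
most `log (3V) ^ (p + 1)`, while `∫ dv / v = log V ≤ log (3V)`; finally `1 + t ≥ 2` gives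
`log (3V) = log (3 (1 + 2/c²)) + 2 log (1 + t) ≤ A log (1 + t)` with `A` depending only on `c`.
-/

open MeasureTheory Set Real

/-- The auxiliary function `f_{1/2}(v) = v (1 + 2 ln v)^{-1/2}`. -/
noncomputable def fHalf (v : ℝ) : ℝ := v * (1 + 2 * Real.log v) ^ (-(1 / 2 : ℝ))

lemma fHalf_sq {v : ℝ} (hv : 1 ≤ v) : fHalf v ^ 2 = v ^ 2 / (1 + 2 * log v) := by
  have hL : 0 < 1 + 2 * log v := by linarith [log_nonneg hv]
  rw [fHalf, mul_pow, ← rpow_mul_natCast hL.le]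
  norm_num [rpow_neg_one, div_eq_mul_inv]

lemma half_le_fHalf_sq {v : ℝ} (hv : 1 ≤ v) : v / 2 ≤ fHalf v ^ 2 := by
  have hL : 0 < 1 + 2 * log v := by linarith [log_nonneg hv]
  have hL2v : 1 + 2 * log v ≤ 2 * v := by linarith [log_le_sub_one_of_pos (by linarith : 0 < v)]
  rw [fHalf_sq hv, le_div_iff₀ hL]
  nlinarith

lemma fHalf_nonneg {v : ℝ} (hv : 1 ≤ v) : 0 ≤ fHalf v :=
  mul_nonneg (by linarith) (rpow_nonneg (by linarith [log_nonneg hv]) _)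

lemma lt_of_mul_fHalf_lt {c t v : ℝ} (hc : 0 < c) (hv : 1 ≤ v) (h : c * fHalf v < t) :
    v < 2 * (t / c) ^ 2 := by
  have h0 : 0 ≤ c * fHalf v := mul_nonneg hc.le (fHalf_nonneg hv)
  have hsq : c ^ 2 * fHalf v ^ 2 < t ^ 2 := by
    rw [← mul_pow]; exact pow_lt_pow_left₀ h h0 two_ne_zero
  rw [div_pow, mul_div_assoc', lt_div_iff₀ (by positivity)]
  nlinarith [half_le_fHalf_sq hv]

lemma lintegral_Ioc_ofReal_inv {a b : ℝ} (ha : 0 < a) (hab : a ≤ b) :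
    ∫⁻ v in Ioc a b, ENNReal.ofReal v⁻¹ = ENNReal.ofReal (log (b / a)) := by
  have hint : IntegrableOn (fun v : ℝ => v⁻¹) (Ioc a b) :=
    (intervalIntegral.intervalIntegrable_inv (fun x hx => ?_) continuousOn_id).1
  rw [← ofReal_integral_eq_lintegral_ofReal hint, ← intervalIntegral.integral_of_le hab,
    integral_inv_of_pos ha (ha.trans_le hab)]
  · filter_upwards [ae_restrict_mem measurableSet_Ioc] with v hv
    exact inv_nonneg.2 (ha.trans hv.1).le
  · rw [uIcc_of_le hab] at hx
    exact (ha.trans_le hx.1).ne'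

lemma log_mul_sq_le {M s : ℝ} (hM : 1 ≤ M) (hs : 2 ≤ s) :
    log (M * s ^ 2) ≤ (log M / log 2 + 2) * log s := by
  have hlog2 : 0 < log 2 := log_pos one_lt_two
  have h2s : log 2 ≤ log s := log_le_log two_pos hs
  have hM' : log M ≤ log M / log 2 * log s := by
    rw [div_mul_eq_mul_div, le_div_iff₀ hlog2]
    exact mul_le_mul_of_nonneg_left h2s (log_nonneg hM)
  rw [log_mul (by positivity) (by positivity), log_pow]
  push_cast
  linarith

lemma setLIntegral_ite_le {α : Type*} [MeasurableSpace α] {μ : Measure α} {s t : Set α}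
    {P : α → Prop} [DecidablePred P] {f : α → ENNReal} (hs : MeasurableSet s)
    (ht : MeasurableSet t)
    (hP : ∀ x ∈ s, P x → x ∈ t) :
    ∫⁻ x in s, (if P x then f x else 0) ∂μ ≤ ∫⁻ x in t, f x ∂μ := by
  calc ∫⁻ x in s, (if P x then f x else 0) ∂μ ≤ ∫⁻ x in s, t.indicator f x ∂μ := by
        refine setLIntegral_mono' hs fun x hx => ?_
        split_ifs with h
        · rw [indicator_of_mem (hP x hx h)]
        · exact zero_le
    _ ≤ ∫⁻ x, t.indicator f x ∂μ := setLIntegral_le_lintegral s _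
    _ = ∫⁻ x in t, f x ∂μ := lintegral_indicator ht f

lemma lintegral_Ioc_inv_mul_log_rpow_le {q V : ℝ} (hq : 0 ≤ q) (hV : 1 ≤ V) :
    ∫⁻ v in Ioc 1 V, ENNReal.ofReal ((1 / v) * log (1 + 2 * v) ^ q) ≤
      ENNReal.ofReal (log (3 * V) ^ (q + 1)) := by
  have hlog : 0 < log (3 * V) := log_pos (by linarith)
  calc ∫⁻ v in Ioc 1 V, ENNReal.ofReal ((1 / v) * log (1 + 2 * v) ^ q)
      ≤ ∫⁻ v in Ioc 1 V, ENNReal.ofReal (log (3 * V) ^ q) * ENNReal.ofReal v⁻¹ := by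
        refine setLIntegral_mono' measurableSet_Ioc fun v hv => ?_
        have hv0 : 0 < v := one_pos.trans hv.1
        rw [← ENNReal.ofReal_mul (by positivity), mul_comm, one_div]
        gcongr
        · exact log_nonneg (by linarith)
        · linarith [hv.2]
    _ = ENNReal.ofReal (log (3 * V) ^ q * log V) := by
        rw [lintegral_const_mul _ (by fun_prop), lintegral_Ioc_ofReal_inv one_pos hV, div_one,
          ENNReal.ofReal_mul (by positivity)]
    _ ≤ ENNReal.ofReal (log (3 * V) ^ (q + 1)) := by
        rw [rpow_add_one hlog.ne']
        gcongr
        linarith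

/-- Let `p ≥ 0` and `c > 0`. There is a constant `K > 0` such that for every `t ≥ 1`,
`∫_1^∞ (1/v) (log(1+2v))^{p+1} 1{t > c f_{1/2}(v)} dv ≤ K (log(1+t))^{p+2}`. -/
theorem single_integral_log_bound (p : ℝ) (hp : 0 ≤ p) (c : ℝ) (hc : 0 < c) :
    ∃ K : ℝ, 0 < K ∧ ∀ t : ℝ, 1 ≤ t →
      (∫⁻ v in Set.Ioi (1 : ℝ),
        ENNReal.ofReal
          (if c * fHalf v < t then (1 / v) * Real.log (1 + 2 * v) ^ (p + 1) else 0)) ≤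
        ENNReal.ofReal (K * Real.log (1 + t) ^ (p + 2)) := by
  have h2c : 0 ≤ 2 / c ^ 2 := by positivity
  have hM : 1 ≤ 3 * (1 + 2 / c ^ 2) := by linarith
  set A := log (3 * (1 + 2 / c ^ 2)) / log 2 + 2
  have hA : 0 < A := by have := log_nonneg hM; positivity
  refine ⟨A ^ (p + 2), by positivity, fun t ht => ?_⟩
  set V := (1 + 2 / c ^ 2) * (1 + t) ^ 2
  have hV : 2 * (t / c) ^ 2 ≤ V := by
    calc 2 * (t / c) ^ 2 = 2 / c ^ 2 * t ^ 2 := by ring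
      _ ≤ (1 + 2 / c ^ 2) * (1 + t) ^ 2 := by gcongr <;> linarith
  have hV1 : 1 ≤ V := one_le_mul_of_one_le_of_one_le (by linarith) (one_le_pow₀ (by linarith))
  have hlog : log (3 * V) ≤ A * log (1 + t) := by
    simpa only [mul_assoc] using log_mul_sq_le hM (by linarith : (2 : ℝ) ≤ 1 + t)
  calc (∫⁻ v in Ioi (1 : ℝ), ENNReal.ofReal
          (if c * fHalf v < t then (1 / v) * log (1 + 2 * v) ^ (p + 1) else 0))
      ≤ ∫⁻ v in Ioc 1 V, ENNReal.ofReal ((1 / v) * log (1 + 2 * v) ^ (p + 1)) := by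
        simp only [apply_ite ENNReal.ofReal, ENNReal.ofReal_zero]
        exact setLIntegral_ite_le measurableSet_Ioi measurableSet_Ioc fun v hv h =>
          ⟨hv, (lt_of_mul_fHalf_lt hc (le_of_lt hv) h).le.trans hV⟩
    _ ≤ ENNReal.ofReal (log (3 * V) ^ (p + 1 + 1)) :=
        lintegral_Ioc_inv_mul_log_rpow_le (by linarith) hV1
    _ ≤ ENNReal.ofReal (A ^ (p + 2) * log (1 + t) ^ (p + 2)) := by
        rw [← mul_rpow hA.le (log_nonneg (by linarith)), add_assoc, one_add_one_eq_two]
        gcongr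
        exact log_nonneg (by linarith)
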